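/- arXiv:math/0211381 — 3 statements merged into one kernel-verified Lean document; each statement's English description precedes it below -/
import Mathlib

section
/- Let (X,d) be a complete metric space and M : X → [0,∞) a locally bounded function. Then for each σ > 0 and each u ∈ X with M(u) > 0, there exists v ∈ X such that (i) d(u,v) ≤ 2/(σ·M(u)), (ii) M(v) ≥ M(u), and (iii) for all x ∈ X, d(x,v) ≤ 1/(σ·M(v)) implies M(x) ≤ 2·M(v). -/
/-!
Argue by contradiction. If no point `v` works, start at `u` and repeatedly jump from the current
point `v` to a point `x` with `M x > 2 M v` and `d(x, v) ≤ 1/(σ M v)`. After `n` jumps `M` has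
grown at least by the factor `2ⁿ`, so the `n`-th jump has length at most `2⁻ⁿ/(σ M u)`; the
total distance travelled stays below `2/(σ M u)`, so every point reached is again admissible
and the construction never stops. The jumps form a Cauchy sequence along which `M → ∞`, which
is impossible near its limit because `M` is locally bounded.
-/

open Filter Topology

theorem exists_seq_of_forall_exists_succ {α : Type*} {P : ℕ → α → Prop}
    {R : ℕ → α → α → Prop} {a : α} (h0 : P 0 a)
    (hstep : ∀ n x, P n x → ∃ y, P (n + 1) y ∧ R n x y) :
    ∃ f : ℕ → α, (∀ n, P n (f n)) ∧ ∀ n, R n (f n) (f (n + 1)) := by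
  choose next hnextP hnextR using hstep
  let F : ∀ n, {x // P n x} := fun n =>
    Nat.rec ⟨a, h0⟩ (fun n x => ⟨next n x x.2, hnextP n x x.2⟩) n
  exact ⟨fun n => (F n).1, fun n => (F n).2, fun n => hnextR n (F n).1 (F n).2⟩

theorem not_tendsto_atTop_comp_of_locally_bounded {X ι : Type*} [TopologicalSpace X]
    {M : X → ℝ} (hloc : ∀ x : X, ∃ U ∈ 𝓝 x, ∃ C : ℝ, ∀ y ∈ U, M y ≤ C)
    {l : Filter ι} [l.NeBot] {f : ι → X} {v : X} (hf : Tendsto f l (𝓝 v)) :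
    ¬Tendsto (M ∘ f) l atTop := by
  intro hM
  obtain ⟨U, hU, C, hC⟩ := hloc v
  obtain ⟨i, hiU, hiC⟩ := ((hf.eventually_mem hU).and (hM.eventually_gt_atTop C)).exists
  exact (hC _ hiU).not_gt hiC

section Doubling

variable {X : Type*} [MetricSpace X] {M : X → ℝ} {σ : ℝ} {u : X}

theorem exists_doubling_step (hσ : 0 < σ) (hu : 0 < M u)
    (hbad : ∀ v, dist u v ≤ 2 / (σ * M u) → M u ≤ M v →
      ∃ x, dist x v ≤ 1 / (σ * M v) ∧ 2 * M v < M x)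
    {n : ℕ} {v : X} (hMv : 2 ^ n * M u ≤ M v)
    (hdv : dist u v ≤ (2 - 2 / 2 ^ n) / (σ * M u)) :
    ∃ w, (2 ^ (n + 1) * M u ≤ M w ∧ dist u w ≤ (2 - 2 / 2 ^ (n + 1)) / (σ * M u)) ∧
      dist v w ≤ 1 / (σ * M u) * (1 / 2) ^ n := by
  have hpow : (1 : ℝ) ≤ 2 ^ n := one_le_pow₀ one_le_two
  have hadm : dist u v ≤ 2 / (σ * M u) :=
    hdv.trans (by gcongr; linarith [show (0 : ℝ) < 2 / 2 ^ n by positivity])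
  obtain ⟨x, hxv, hMx⟩ := hbad v hadm (le_trans (le_mul_of_one_le_left hu.le hpow) hMv)
  have hjump : dist v x ≤ 1 / (σ * M u) * (1 / 2) ^ n := calc
    dist v x ≤ 1 / (σ * M v) := dist_comm v x ▸ hxv
    _ ≤ 1 / (σ * (2 ^ n * M u)) := by gcongr
    _ = 1 / (σ * M u) * (1 / 2) ^ n := by rw [one_div_pow]; field_simp
  refine ⟨x, ⟨?_, ?_⟩, hjump⟩
  · calc 2 ^ (n + 1) * M u = 2 * (2 ^ n * M u) := by ring
      _ ≤ 2 * M v := by gcongr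
      _ ≤ M x := hMx.le
  · calc dist u x ≤ dist u v + dist v x := dist_triangle u v x
      _ ≤ (2 - 2 / 2 ^ n) / (σ * M u) + 1 / (σ * M u) * (1 / 2) ^ n := add_le_add hdv hjump
      _ = (2 - 2 / 2 ^ (n + 1)) / (σ * M u) := by rw [one_div_pow]; field_simp; ring

end Doubling

theorem metric_space_lemma_general {X : Type*} [MetricSpace X] [CompleteSpace X]
    (M : X → ℝ)
    (hloc : ∀ x : X, ∃ U ∈ nhds x, ∃ C : ℝ, ∀ y ∈ U, M y ≤ C)
    (σ : ℝ) (hσ : 0 < σ) (u : X) (hu : 0 < M u) :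
    ∃ v : X, dist u v ≤ 2 / (σ * M u) ∧ M u ≤ M v ∧
      ∀ x : X, dist x v ≤ 1 / (σ * M v) → M x ≤ 2 * M v := by
  by_contra! hbad
  obtain ⟨f, hfM, hfdist⟩ := exists_seq_of_forall_exists_succ
    (P := fun n v => 2 ^ n * M u ≤ M v ∧ dist u v ≤ (2 - 2 / 2 ^ n) / (σ * M u)) (a := u)
    (by simp) (fun n v hv => exists_doubling_step hσ hu hbad hv.1 hv.2)
  obtain ⟨v, hv⟩ := cauchySeq_tendsto_of_complete
    (cauchySeq_of_le_geometric _ _ (by norm_num) hfdist)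
  have hMf : Tendsto (M ∘ f) atTop atTop :=
    tendsto_atTop_mono (fun n => (hfM n).1)
      ((tendsto_pow_atTop_atTop_of_one_lt one_lt_two).atTop_mul_const hu)
  exact not_tendsto_atTop_comp_of_locally_bounded hloc hv hMf

/-- Metric-space lemma (Gromov): in a complete metric space, for a nonnegative
locally bounded `M`, any `σ > 0` and `u` with `M u > 0`, there is `v` with
`d(u,v) ≤ 2/(σ M u)`, `M v ≥ M u`, and `M ≤ 2 M v` on the ball of radius
`1/(σ M v)` around `v`. -/
theorem metric_space_lemma {X : Type*} [MetricSpace X] [CompleteSpace X]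
    (M : X → ℝ) (hM0 : ∀ x, 0 ≤ M x)
    (hloc : ∀ x : X, ∃ U ∈ nhds x, ∃ C : ℝ, ∀ y ∈ U, M y ≤ C)
    (σ : ℝ) (hσ : 0 < σ) (u : X) (hu : 0 < M u) :
    ∃ v : X, dist u v ≤ 2 / (σ * M u) ∧ M u ≤ M v ∧
      ∀ x : X, dist x v ≤ 1 / (σ * M v) → M x ≤ 2 * M v :=
  metric_space_lemma_general M hloc σ hσ u hu
end

section
/- In a complete metric space (X,d) with M : X → [0,∞) locally bounded, σ > 0, u ∈ X with M(u) > 0: if for every v ∈ X satisfying d(u,v) ≤ 2/(σ·M(u)) and M(v) ≥ M(u) there is some x with d(x,v) ≤ 1/(σ·M(v)) and M(x) > 2·M(v), then one can construct a sequence (v_n) with v_0 = u, M(v_{n+1}) ≥ 2·M(v_n), and d(v_{n+1}, v_n) ≤ 2^{-n}/(σ·M(u)); such a sequence is Cauchy, yet M(v_n) ≥ 2^n·M(u) → ∞, contradicting local boundedness of M at the limit. Hence such a v must exist. -/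
/-!
From any point `x` of the ball of radius `2 / (σ M u)` about `u` with `M u ≤ M x`, the hypothesis
lets one jump, by at most `1 / (σ M x)`, to a point where `M` more than doubles. The quantity
`dist u x + 2 / (σ M x)` does not increase along a jump, so the walk never leaves that ball and
can be continued forever. The jumps shrink geometrically, so the walk converges, while `M` blows
up along it, which local boundedness of `M` at the limit forbids.
-/

open Filter Topology

theorem exists_seq_of_forall_exists {α : Type*} {P : α → Prop} {R : α → α → Prop} {a : α}
    (ha : P a) (h : ∀ x, P x → ∃ y, P y ∧ R x y) :
    ∃ v : ℕ → α, v 0 = a ∧ ∀ n, R (v n) (v (n + 1)) := by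
  have : Nonempty α := ⟨a⟩
  choose! f hfP hfR using h
  have hP : ∀ n, P (f^[n] a) := fun n => by
    induction n with
    | zero => exact ha
    | succ n ih => rw [Function.iterate_succ_apply']; exact hfP _ ih
  exact ⟨fun n => f^[n] a, rfl, fun n => by
    simp only [Function.iterate_succ_apply']; exact hfR _ (hP n)⟩

theorem CauchySeq.not_tendsto_atTop_of_locallyBoundedAbove {X α : Type*} [UniformSpace X]
    [CompleteSpace X] [Preorder α] [NoMaxOrder α] {M : X → α}
    (hloc : ∀ x : X, ∃ U ∈ 𝓝 x, ∃ C, ∀ y ∈ U, M y ≤ C) {v : ℕ → X} (hv : CauchySeq v) :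
    ¬Tendsto (fun n => M (v n)) atTop atTop := by
  intro htend
  obtain ⟨L, hL⟩ := cauchySeq_tendsto_of_complete hv
  obtain ⟨U, hU, C, hC⟩ := hloc L
  obtain ⟨n, hnU, hnC⟩ := ((hL.eventually_mem hU).and (htend.eventually_gt_atTop C)).exists
  exact (hC _ hnU).not_gt hnC

section Walk

variable {X : Type*} [MetricSpace X] {M : X → ℝ} {σ : ℝ} {u : X}

theorem exists_jump_of_forall_exists (hσ : 0 < σ) (hu : 0 < M u)
    (hneg : ∀ v : X, dist u v ≤ 2 / (σ * M u) → M u ≤ M v →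
      ∃ x : X, dist x v ≤ 1 / (σ * M v) ∧ 2 * M v < M x)
    {x : X} (hMx : M u ≤ M x) (hx : dist u x + 2 / (σ * M x) ≤ 2 / (σ * M u)) :
    ∃ y : X, (M u ≤ M y ∧ dist u y + 2 / (σ * M y) ≤ 2 / (σ * M u)) ∧
      2 * M x ≤ M y ∧ dist y x ≤ 1 / (σ * M x) := by
  have hx_pos : 0 < M x := hu.trans_le hMx
  have hx_ball : dist u x ≤ 2 / (σ * M u) := by
    have : 0 ≤ 2 / (σ * M x) := by positivity
    linarith
  obtain ⟨y, hyx, hMy⟩ := hneg x hx_ball hMx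
  have hpot : 2 / (σ * M y) ≤ 1 / (σ * M x) := by
    rw [div_le_div_iff₀ (by nlinarith) (by positivity)]
    nlinarith
  refine ⟨y, ⟨by linarith, ?_⟩, hMy.le, hyx⟩
  calc dist u y + 2 / (σ * M y) ≤ dist u x + dist y x + 1 / (σ * M x) := by
        rw [dist_comm y x]; gcongr; exact dist_triangle u x y
    _ = dist u x + dist y x + 2 / (σ * M x) - 1 / (σ * M x) := by ring
    _ ≤ 2 / (σ * M u) := by linarith

theorem exists_doubling_seq_of_forall_exists (hσ : 0 < σ) (hu : 0 < M u)
    (hneg : ∀ v : X, dist u v ≤ 2 / (σ * M u) → M u ≤ M v →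
      ∃ x : X, dist x v ≤ 1 / (σ * M v) ∧ 2 * M v < M x) :
    ∃ v : ℕ → X, v 0 = u ∧
      (∀ n : ℕ, 2 * M (v n) ≤ M (v (n + 1))) ∧
      (∀ n : ℕ, dist (v (n + 1)) (v n) ≤ (1 / 2 ^ n) * (1 / (σ * M u))) := by
  obtain ⟨v, hv0, hv⟩ := exists_seq_of_forall_exists
    (P := fun x => M u ≤ M x ∧ dist u x + 2 / (σ * M x) ≤ 2 / (σ * M u))
    (R := fun x y => 2 * M x ≤ M y ∧ dist y x ≤ 1 / (σ * M x))
    ⟨le_rfl, by simp⟩ fun x hx => exists_jump_of_forall_exists hσ hu hneg hx.1 hx.2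
  refine ⟨v, hv0, fun n => (hv n).1, fun n => (hv n).2.trans ?_⟩
  have hgrowth : 2 ^ n * M u ≤ M (v n) := hv0 ▸ geom_le zero_le_two n fun k _ => (hv k).1
  have hpos : 0 < 2 ^ n * (σ * M u) := by positivity
  have hle : 2 ^ n * (σ * M u) ≤ σ * M (v n) := by nlinarith
  rwa [one_div_mul_one_div, one_div_le_one_div (hpos.trans_le hle) hpos]

end Walk

theorem metric_space_lemma_contradiction_general {X : Type*} [MetricSpace X] [CompleteSpace X]
    (M : X → ℝ)
    (hloc : ∀ x : X, ∃ U ∈ nhds x, ∃ C : ℝ, ∀ y ∈ U, M y ≤ C)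
    (σ : ℝ) (hσ : 0 < σ) (u : X) (hu : 0 < M u)
    (hneg : ∀ v : X, dist u v ≤ 2 / (σ * M u) → M u ≤ M v →
      ∃ x : X, dist x v ≤ 1 / (σ * M v) ∧ 2 * M v < M x) :
    (∃ v : ℕ → X, v 0 = u ∧
        (∀ n : ℕ, 2 * M (v n) ≤ M (v (n + 1))) ∧
        (∀ n : ℕ, dist (v (n + 1)) (v n) ≤ (1 / 2 ^ n) * (1 / (σ * M u)))) ∧
      (∀ v : ℕ → X, v 0 = u →
        (∀ n : ℕ, 2 * M (v n) ≤ M (v (n + 1))) →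
        (∀ n : ℕ, dist (v (n + 1)) (v n) ≤ (1 / 2 ^ n) * (1 / (σ * M u))) →
        CauchySeq v ∧ (∀ n : ℕ, 2 ^ n * M u ≤ M (v n)) ∧
          Filter.Tendsto (fun n => M (v n)) Filter.atTop Filter.atTop) ∧
      False := by
  have blowup : ∀ v : ℕ → X, v 0 = u →
      (∀ n : ℕ, 2 * M (v n) ≤ M (v (n + 1))) →
      (∀ n : ℕ, dist (v (n + 1)) (v n) ≤ (1 / 2 ^ n) * (1 / (σ * M u))) →
      CauchySeq v ∧ (∀ n : ℕ, 2 ^ n * M u ≤ M (v n)) ∧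
        Tendsto (fun n => M (v n)) atTop atTop := by
    intro v hv0 hgrow hdist
    refine ⟨cauchySeq_of_le_geometric (1 / 2) (1 / (σ * M u)) one_half_lt_one fun n => ?_,
      fun n => hv0 ▸ geom_le zero_le_two n fun k _ => hgrow k,
      tendsto_atTop_of_geom_le (hv0 ▸ hu) one_lt_two hgrow⟩
    simpa only [dist_comm, div_pow, one_pow, mul_comm] using hdist n
  obtain ⟨v, hv0, hgrow, hdist⟩ := exists_doubling_seq_of_forall_exists hσ hu hneg
  obtain ⟨hcauchy, -, htend⟩ := blowup v hv0 hgrow hdist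
  exact ⟨⟨v, hv0, hgrow, hdist⟩, blowup, hcauchy.not_tendsto_atTop_of_locallyBoundedAbove hloc htend⟩

/-- Proof-by-contradiction structure of the metric-space lemma: if every
candidate `v` fails condition (iii), then one can construct a sequence
`v_n` with `v 0 = u`, `M (v (n+1)) ≥ 2 M (v n)` and
`d(v (n+1), v n) ≤ 2⁻ⁿ/(σ M u)`; such a sequence is Cauchy while `M (v n) → ∞`,
contradicting local boundedness; hence the desired `v` exists. -/
theorem metric_space_lemma_contradiction {X : Type*} [MetricSpace X] [CompleteSpace X]
    (M : X → ℝ) (hM0 : ∀ x, 0 ≤ M x)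
    (hloc : ∀ x : X, ∃ U ∈ nhds x, ∃ C : ℝ, ∀ y ∈ U, M y ≤ C)
    (σ : ℝ) (hσ : 0 < σ) (u : X) (hu : 0 < M u)
    (hneg : ∀ v : X, dist u v ≤ 2 / (σ * M u) → M u ≤ M v →
      ∃ x : X, dist x v ≤ 1 / (σ * M v) ∧ 2 * M v < M x) :
    (∃ v : ℕ → X, v 0 = u ∧
        (∀ n : ℕ, 2 * M (v n) ≤ M (v (n + 1))) ∧
        (∀ n : ℕ, dist (v (n + 1)) (v n) ≤ (1 / 2 ^ n) * (1 / (σ * M u)))) ∧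
      (∀ v : ℕ → X, v 0 = u →
        (∀ n : ℕ, 2 * M (v n) ≤ M (v (n + 1))) →
        (∀ n : ℕ, dist (v (n + 1)) (v n) ≤ (1 / 2 ^ n) * (1 / (σ * M u))) →
        CauchySeq v ∧ (∀ n : ℕ, 2 ^ n * M u ≤ M (v n)) ∧
          Filter.Tendsto (fun n => M (v n)) Filter.atTop Filter.atTop) ∧
      False :=
  metric_space_lemma_contradiction_general M hloc σ hσ u hu hneg
end

section
/- Let h(u) = Σ_{l=0}^∞ η_l·u^l be entire, α, β ∈ ℂ with |α| > 1 and |β| < |α|^N for an integer N ≥ 1. For each n define ψ_n(u) = Σ_{k=0}^{n-1} β^k · R_N(α^{−1−k}·u), where R_N(u) = Σ_{l=N}^∞ η_l·u^l is the N-th remainder of h. Then ψ_n converges pointwise (indeed uniformly on compact subsets of ℂ) as n → ∞ to ψ(u) = Σ_{l=N}^∞ η_l/(α^l − β)·u^l. -/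
/-!
Write `R_N(α^{-(k+1)} u) = Σ_{l ≥ N} η_l α^{-(k+1)l} uˡ`. Since only powers `l ≥ N` occur, the
`k`-th term `βᵏ R_N(α^{-(k+1)} u)` is at most `(‖β‖ / ‖α‖ᴺ)ᵏ` times a bound depending only on
`‖u‖`, so the Weierstrass M-test gives uniform convergence on bounded sets. The same bound makes
the double series in `(k, l)` absolutely summable, and summing it over `k` first, the geometric
series `Σ_k βᵏ α^{-(k+1)l} = 1 / (αˡ - β)` identifies the limit with `ψ`.
-/

open Filter

section PowerSeries

variable {𝕜 : Type*}

theorem summable_norm_mul_pow_of_forall_summable [NontriviallyNormedField 𝕜] {a : ℕ → 𝕜}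
    (ha : ∀ z : 𝕜, Summable fun l => a l * z ^ l) {r : ℝ} (hr : 0 ≤ r) :
    Summable fun l => ‖a l‖ * r ^ l := by
  obtain ⟨z, hz⟩ := NormedField.exists_lt_norm 𝕜 r
  have hz0 : 0 < ‖z‖ := hr.trans_lt hz
  obtain ⟨B, hB⟩ := (ha z).tendsto_atTop_zero.norm.bddAbove_range
  refine .of_nonneg_of_le (fun l => by positivity) (fun l => ?_)
    ((summable_geometric_of_lt_one (by positivity) ((div_lt_one hz0).2 hz)).mul_left B)
  calc ‖a l‖ * r ^ l = ‖a l * z ^ l‖ * (r / ‖z‖) ^ l := by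
        rw [norm_mul, norm_pow, div_pow]; field_simp
    _ ≤ B * (r / ‖z‖) ^ l := by gcongr; exact hB (Set.mem_range_self l)

variable [NormedField 𝕜]

def tailTerm (η : ℕ → 𝕜) (N : ℕ) (w : 𝕜) (l : ℕ) : 𝕜 :=
  if N ≤ l then η l * w ^ l else 0

theorem norm_tailTerm_le (η : ℕ → 𝕜) (N : ℕ) {w : 𝕜} {t ρ : ℝ} (ht₀ : 0 ≤ t) (ht₁ : t ≤ 1)
    (hρ : 0 ≤ ρ) (hw : ‖w‖ ≤ t * ρ) (l : ℕ) :
    ‖tailTerm η N w l‖ ≤ t ^ N * (‖η l‖ * ρ ^ l) := by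
  unfold tailTerm
  split_ifs with hl
  · calc ‖η l * w ^ l‖ ≤ ‖η l‖ * (t * ρ) ^ l := by
          rw [norm_mul, norm_pow]; gcongr
      _ = t ^ l * (‖η l‖ * ρ ^ l) := by ring
      _ ≤ t ^ N * (‖η l‖ * ρ ^ l) := by
          gcongr ?_ * _
          exact pow_le_pow_of_le_one ht₀ ht₁ hl
  · rw [norm_zero]; positivity

theorem norm_le_of_hasSum_tailTerm {η : ℕ → 𝕜} {N : ℕ} {w r : 𝕜} {t ρ : ℝ} (ht₀ : 0 ≤ t)
    (ht₁ : t ≤ 1) (hρ : 0 ≤ ρ) (hw : ‖w‖ ≤ t * ρ) (hη : Summable fun l => ‖η l‖ * ρ ^ l)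
    (hr : HasSum (tailTerm η N w) r) :
    ‖r‖ ≤ t ^ N * ∑' l, ‖η l‖ * ρ ^ l :=
  hr.norm_le_of_bounded (hη.hasSum.mul_left _) (norm_tailTerm_le η N ht₀ ht₁ hρ hw)

theorem hasSum_pow_mul_inv_pow_succ {a β : 𝕜} (h : ‖β‖ < ‖a‖) :
    HasSum (fun k : ℕ => β ^ k * a⁻¹ ^ (k + 1)) (a - β)⁻¹ := by
  have ha : a ≠ 0 := norm_pos_iff.1 ((norm_nonneg β).trans_lt h)
  have hab : a - β ≠ 0 := sub_ne_zero.2 fun e => h.ne (by rw [e])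
  have hq : ‖β / a‖ < 1 := by rwa [norm_div, div_lt_one (norm_pos_iff.2 ha)]
  have hterm : (fun k : ℕ => β ^ k * a⁻¹ ^ (k + 1)) = fun k => a⁻¹ * (β / a) ^ k := by
    ext k; rw [div_eq_mul_inv, mul_pow, pow_succ]; ring
  rw [hterm, show (a - β)⁻¹ = a⁻¹ * (1 - β / a)⁻¹ by field_simp]
  exact (hasSum_geometric_of_norm_lt_one hq).mul_left a⁻¹

theorem zpow_neg_one_sub_natCast (α : 𝕜) (k : ℕ) : α ^ (-1 - (k : ℤ)) = α⁻¹ ^ (k + 1) := by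
  rw [show -1 - (k : ℤ) = -((k + 1 : ℕ) : ℤ) by push_cast; ring, zpow_neg, zpow_natCast, inv_pow]

end PowerSeries

section Renormalization

variable {𝕜 : Type*} [NormedField 𝕜] {η : ℕ → 𝕜} {α β : 𝕜} {N : ℕ}

theorem hasSum_mul_tailTerm_inv_pow_succ (hα : 1 ≤ ‖α‖) (hβ : ‖β‖ < ‖α‖ ^ N) (u : 𝕜) (l : ℕ) :
    HasSum (fun k : ℕ => β ^ k * tailTerm η N (α⁻¹ ^ (k + 1) * u) l)
      (if N ≤ l then η l / (α ^ l - β) * u ^ l else 0) := by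
  unfold tailTerm
  split_ifs with hl
  · have hβl : ‖β‖ < ‖α ^ l‖ := hβ.trans_le (by rw [norm_pow]; exact pow_le_pow_right₀ hα hl)
    have hterm : (fun k : ℕ => β ^ k * (η l * (α⁻¹ ^ (k + 1) * u) ^ l))
        = fun k => η l * u ^ l * (β ^ k * (α ^ l)⁻¹ ^ (k + 1)) := by
      ext k; rw [mul_pow, ← pow_mul, mul_comm (k + 1), pow_mul, inv_pow]; ring
    rw [hterm, div_mul_eq_mul_div, div_eq_mul_inv]
    exact (hasSum_pow_mul_inv_pow_succ hβl).mul_left (η l * u ^ l)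
  · simp only [mul_zero]; exact hasSum_zero

theorem norm_inv_pow_succ_mul_le (k : ℕ) (u : 𝕜) :
    ‖α⁻¹ ^ (k + 1) * u‖ ≤ ‖α⁻¹‖ ^ k * (‖α⁻¹‖ * ‖u‖) := by
  rw [norm_mul, norm_pow, pow_succ, mul_assoc]

theorem norm_inv_le_one (hα : 1 ≤ ‖α‖) : ‖α⁻¹‖ ≤ 1 := by
  rw [norm_inv]; exact inv_le_one_of_one_le₀ hα

theorem norm_mul_norm_inv_pow_lt_one (hα : 1 ≤ ‖α‖) (hβ : ‖β‖ < ‖α‖ ^ N) :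
    ‖β‖ * ‖α⁻¹‖ ^ N < 1 := by
  rwa [norm_inv, inv_pow, ← div_eq_mul_inv, div_lt_one (by positivity)]

theorem norm_pow_mul_le_of_hasSum_tailTerm (hα : 1 ≤ ‖α‖) {C : ℝ}
    (hη : Summable fun l => ‖η l‖ * (‖α⁻¹‖ * C) ^ l) {R : 𝕜 → 𝕜}
    (hR : ∀ w, HasSum (tailTerm η N w) (R w)) (k : ℕ) {u : 𝕜} (hu : ‖u‖ ≤ C) :
    ‖β ^ k * R (α⁻¹ ^ (k + 1) * u)‖
      ≤ (‖β‖ * ‖α⁻¹‖ ^ N) ^ k * ∑' l, ‖η l‖ * (‖α⁻¹‖ * C) ^ l := by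
  have hR_le := norm_le_of_hasSum_tailTerm (pow_nonneg (norm_nonneg α⁻¹) k)
    (pow_le_one₀ (norm_nonneg _) (norm_inv_le_one hα))
    (mul_nonneg (norm_nonneg _) ((norm_nonneg u).trans hu))
    ((norm_inv_pow_succ_mul_le k u).trans (by gcongr)) hη (hR (α⁻¹ ^ (k + 1) * u))
  rw [norm_mul, norm_pow, mul_pow, pow_right_comm, mul_assoc]
  gcongr

theorem hasSum_pow_mul_of_hasSum_tailTerm [CompleteSpace 𝕜] (hα : 1 ≤ ‖α‖)
    (hβ : ‖β‖ < ‖α‖ ^ N) {u : 𝕜} (hη : Summable fun l => ‖η l‖ * (‖α⁻¹‖ * ‖u‖) ^ l)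
    {R : 𝕜 → 𝕜} (hR : ∀ w, HasSum (tailTerm η N w) (R w)) {ψu : 𝕜}
    (hψ : HasSum (fun l => if N ≤ l then η l / (α ^ l - β) * u ^ l else 0) ψu) :
    HasSum (fun k : ℕ => β ^ k * R (α⁻¹ ^ (k + 1) * u)) ψu := by
  set F : ℕ × ℕ → 𝕜 := fun p => β ^ p.1 * tailTerm η N (α⁻¹ ^ (p.1 + 1) * u) p.2
  have hgeom := summable_geometric_of_lt_one (by positivity) (norm_mul_norm_inv_pow_lt_one hα hβ)
  have hprod : Summable fun p : ℕ × ℕ =>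
      (‖β‖ * ‖α⁻¹‖ ^ N) ^ p.1 * (‖η p.2‖ * (‖α⁻¹‖ * ‖u‖) ^ p.2) :=
    hgeom.mul_of_nonneg hη (fun _ => by positivity) (fun _ => by positivity)
  have hF : Summable F := by
    refine .of_norm_bounded hprod fun p => ?_
    have hterm := norm_tailTerm_le η N (pow_nonneg (norm_nonneg α⁻¹) p.1)
      (pow_le_one₀ (norm_nonneg _) (norm_inv_le_one hα)) (by positivity)
      (norm_inv_pow_succ_mul_le p.1 u) p.2
    calc ‖F p‖ ≤ ‖β‖ ^ p.1 * ((‖α⁻¹‖ ^ p.1) ^ N * (‖η p.2‖ * (‖α⁻¹‖ * ‖u‖) ^ p.2)) := by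
          rw [norm_mul, norm_pow]; gcongr
      _ = (‖β‖ * ‖α⁻¹‖ ^ N) ^ p.1 * (‖η p.2‖ * (‖α⁻¹‖ * ‖u‖) ^ p.2) := by
          rw [mul_pow, pow_right_comm]; ring
  have hrows : HasSum (fun k : ℕ => β ^ k * R (α⁻¹ ^ (k + 1) * u)) (∑' p, F p) :=
    hF.hasSum.prod_fiberwise fun k => (hR (α⁻¹ ^ (k + 1) * u)).mul_left (β ^ k)
  have hcols : HasSum (fun l => if N ≤ l then η l / (α ^ l - β) * u ^ l else 0) (∑' p, F p) :=
    ((Equiv.prodComm ℕ ℕ).hasSum_iff.2 hF.hasSum).prod_fiberwise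
      fun l => hasSum_mul_tailTerm_inv_pow_succ hα hβ u l
  rwa [hcols.unique hψ] at hrows

end Renormalization

theorem psi_n_tendsto_psi_general (η : ℕ → ℂ) (α β : ℂ) (N : ℕ)
    (hα : 1 < ‖α‖) (hβN : ‖β‖ < ‖α‖ ^ N)
    (hentire : ∀ u : ℂ, Summable (fun l : ℕ => η l * u ^ l))
    (R : ℂ → ℂ) (hR : ∀ u : ℂ, HasSum (fun l : ℕ => if N ≤ l then η l * u ^ l else 0) (R u))
    (ψ : ℂ → ℂ)
    (hψ : ∀ u : ℂ, HasSum (fun l : ℕ => if N ≤ l then η l / (α ^ l - β) * u ^ l else 0) (ψ u)) :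
    ∀ K : Set ℂ, IsCompact K →
      TendstoUniformlyOn
        (fun (n : ℕ) (u : ℂ) => ∑ k ∈ Finset.range n, β ^ k * R (α ^ (-1 - (k : ℤ)) * u))
        ψ atTop K := by
  intro K hK
  obtain ⟨C, hC₀, hC⟩ := hK.isBounded.exists_pos_norm_le
  have hη (r : ℝ) (hr : 0 ≤ r) := summable_norm_mul_pow_of_forall_summable hentire hr
  have hgeom := summable_geometric_of_lt_one (by positivity)
    (norm_mul_norm_inv_pow_lt_one hα.le hβN)
  simp_rw [zpow_neg_one_sub_natCast]
  have hbound (k : ℕ) (u : ℂ) (hu : u ∈ K) :=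
    norm_pow_mul_le_of_hasSum_tailTerm (β := β) hα.le (hη _ (by positivity)) hR k (hC u hu)
  have hlimit (u : ℂ) :=
    hasSum_pow_mul_of_hasSum_tailTerm hα.le hβN (hη _ (by positivity)) hR (hψ u)
  exact (tendstoUniformlyOn_tsum_nat (hgeom.mul_right _) hbound).congr_right
    fun u _ => (hlimit u).tsum_eq

/-- The partial renormalizations `ψ_n(u) = Σ_{k<n} βᵏ R_N(α^{−1−k} u)` converge,
uniformly on compact subsets of `ℂ`, to `ψ(u) = Σ_{l ≥ N} η_l/(αˡ − β) uˡ`. -/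
theorem psi_n_tendsto_psi (η : ℕ → ℂ) (α β : ℂ) (N : ℕ) (hN : 1 ≤ N)
    (hα : 1 < ‖α‖) (hβN : ‖β‖ < ‖α‖ ^ N)
    (hentire : ∀ u : ℂ, Summable (fun l : ℕ => η l * u ^ l))
    (R : ℂ → ℂ) (hR : ∀ u : ℂ, HasSum (fun l : ℕ => if N ≤ l then η l * u ^ l else 0) (R u))
    (ψ : ℂ → ℂ)
    (hψ : ∀ u : ℂ, HasSum (fun l : ℕ => if N ≤ l then η l / (α ^ l - β) * u ^ l else 0) (ψ u)) :
    ∀ K : Set ℂ, IsCompact K →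
      TendstoUniformlyOn
        (fun (n : ℕ) (u : ℂ) => ∑ k ∈ Finset.range n, β ^ k * R (α ^ (-1 - (k : ℤ)) * u))
        ψ atTop K :=
  psi_n_tendsto_psi_general η α β N hα hβN hentire R hR ψ hψ
end
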